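/- arXiv:1112.6256 — 3 statements merged into one kernel-verified Lean document; each statement's English description precedes it below -/
import Mathlib

section
/- Let 0 < ε < 1 and let v, r be points in a metric space with distance δ, and suppose (z_i)_{i=0,1,...,k} is a sequence of points such that for each i ≥ 1: δ(v, z_i) < (1+ε)^{-1}·(δ(v, z_{i-1}) + δ(r, z_i) − δ(r, z_{i-1})) and δ(v, z_0) ≤ δ(v, z_i). Then for each i, δ(v, z_i) − δ(r, z_i) < δ(v, z_0) − δ(r, z_0) − i·(ε − ε²)·δ(v, z_0). -/
/-!
Multiplying the recurrence by `1 + ε` shows that the potential `δ(v, z) - δ(r, z)` drops at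
step `i` by more than `ε δ(v, z_i) ≥ ε δ(v, z_0) ≥ (ε - ε²) δ(v, z_0)`; summing the drops over
the first `i` steps gives the bound.
-/

lemma sub_lt_sub_sub_mul_of_lt_inv_mul {ε a b a' b' : ℝ} (hε : 0 < ε)
    (h : a' < (1 + ε)⁻¹ * (a + b' - b)) : a' - b' < a - b - ε * a' := by
  rw [inv_mul_eq_div, lt_div_iff₀ (by linarith)] at h
  linarith

lemma lt_sub_natCast_mul_of_lt_sub {f : ℕ → ℝ} {c : ℝ} {k : ℕ}
    (hstep : ∀ i, i < k → f (i + 1) < f i - c) :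
    ∀ i, 1 ≤ i → i ≤ k → f i < f 0 - i * c := by
  intro i hi
  induction i, hi using Nat.le_induction with
  | base => exact fun hk ↦ by simpa using hstep 0 hk
  | succ n hn ih =>
    intro hnk
    have := hstep n hnk
    have := ih (by omega)
    push_cast
    linarith

theorem portal_recurrence_general {X : Type*} [MetricSpace X] (ε : ℝ) (h0 : 0 < ε)
    (v r : X) (k : ℕ) (z : ℕ → X)
    (hrec : ∀ i, 1 ≤ i → i ≤ k →
      dist v (z i) < (1 + ε)⁻¹ * (dist v (z (i - 1)) + dist r (z i) - dist r (z (i - 1))))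
    (hmin : ∀ i, i ≤ k → dist v (z 0) ≤ dist v (z i)) :
    ∀ i, 1 ≤ i → i ≤ k →
      dist v (z i) - dist r (z i) <
        dist v (z 0) - dist r (z 0) - (i : ℝ) * (ε - ε ^ 2) * dist v (z 0) := by
  simp only [mul_assoc]
  refine lt_sub_natCast_mul_of_lt_sub (f := fun i ↦ dist v (z i) - dist r (z i)) fun i hik ↦ ?_
  have hdrop := sub_lt_sub_sub_mul_of_lt_inv_mul h0 (hrec (i + 1) (by omega) hik)
  rw [Nat.add_sub_cancel] at hdrop
  have hmono : ε * dist v (z 0) ≤ ε * dist v (z (i + 1)) :=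
    mul_le_mul_of_nonneg_left (hmin (i + 1) hik) h0.le
  have hsq : 0 ≤ ε ^ 2 * dist v (z 0) := by positivity
  linarith

theorem portal_recurrence {X : Type*} [MetricSpace X] (ε : ℝ) (h0 : 0 < ε) (h1 : ε < 1)
    (v r : X) (k : ℕ) (z : ℕ → X)
    (hrec : ∀ i, 1 ≤ i → i ≤ k →
      dist v (z i) < (1 + ε)⁻¹ * (dist v (z (i - 1)) + dist r (z i) - dist r (z (i - 1))))
    (hmin : ∀ i, i ≤ k → dist v (z 0) ≤ dist v (z i)) :
    ∀ i, 1 ≤ i → i ≤ k →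
      dist v (z i) - dist r (z i) <
        dist v (z 0) - dist r (z 0) - (i : ℝ) * (ε - ε ^ 2) * dist v (z 0) :=
  portal_recurrence_general ε h0 v r k z hrec hmin
end

section
/- Let (X, δ) be a metric space, u, v ∈ X with δ(u, v) = D, and let S ⊆ X be a set such that some point c ∈ S lies on a shortest path from u to v (δ(u,c) + δ(c,v) = D). Let ε > 0 and let Z_u, Z_v ⊆ S be portal sets for u and v on S respectively: for every w ∈ S there is z ∈ Z_u with δ(u,z) + δ(z,w) ≤ (1+ε)δ(u,w), and similarly for Z_v. Then min over (z, z') ∈ Z_u × Z_v of (δ(u,z) + δ(z,z') + δ(z',v)) ≤ (1+ε)·D. -/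
theorem oracle_query_stretch {X : Type*} [MetricSpace X] (u v : X) (D : ℝ)
    (hD : dist u v = D) (S : Set X) (c : X) (hc : c ∈ S)
    (hcpath : dist u c + dist c v = D) (ε : ℝ) (hε : 0 < ε)
    (Zu Zv : Finset X) (hZuS : ↑Zu ⊆ S) (hZvS : ↑Zv ⊆ S)
    (hZu : Zu.Nonempty) (hZv : Zv.Nonempty)
    (hpu : ∀ w ∈ S, ∃ z ∈ Zu, dist u z + dist z w ≤ (1 + ε) * dist u w)
    (hpv : ∀ w ∈ S, ∃ z ∈ Zv, dist v z + dist z w ≤ (1 + ε) * dist v w) :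
    (Zu ×ˢ Zv).inf' (hZu.product hZv)
        (fun zz => dist u zz.1 + dist zz.1 zz.2 + dist zz.2 v) ≤ (1 + ε) * D := by
  obtain ⟨z, hz, hzle⟩ := hpu c hc
  obtain ⟨z', hz', hz'le⟩ := hpv c hc
  have hmem : (z, z') ∈ Zu ×ˢ Zv := Finset.mk_mem_product hz hz'
  refine le_trans (Finset.inf'_le _ hmem) ?_
  have htri : dist z z' ≤ dist z c + dist c z' := dist_triangle z c z'
  have e1 : dist z' v = dist v z' := dist_comm z' v
  have e2 : dist c z' = dist z' c := dist_comm c z'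
  have e3 : dist v c = dist c v := dist_comm v c
  have hsum : (1 + ε) * dist u c + (1 + ε) * dist v c = (1 + ε) * D := by
    rw [e3, ← hcpath]; ring
  simp only
  linarith
end

section
/- Let 0 < ε < 1. For any metric space (X, δ), points v, r, and any finite set P ⊆ X lying on a shortest path from r (i.e., for z, w ∈ P with δ(r,z) ≤ δ(r,w), δ(z,w) = δ(r,w) − δ(r,z)), there exists a subset Z ⊆ P of size less than 4·(ε − ε²)^{-1} such that for every w ∈ P there exists z ∈ Z with δ(v, z) + δ(z, w) ≤ (1+ε)·δ(v, w). -/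
/-!
Let `z₀ ∈ P` be closest to `v`, `d = δ(v, z₀)`, and parametrize the path by `c = δ(r, ·)`.
On each side of `z₀` choose portals greedily: starting from `z₀`, the next portal is the nearest
point (along the path) not yet served by the current one. The potential `δ(v, z) - c z` drops by
more than `ε δ(v, q) ≥ ε d` at each new portal `q`, and by the triangle inequality through `z₀` it
varies by at most `2d` over `P`. So each side needs at most `2 / ε` portals.
-/

open Finset

section

variable {X : Type*} [MetricSpace X]

def IsPortalFor (ε : ℝ) (v z w : X) : Prop :=
  dist v z + dist z w ≤ (1 + ε) * dist v w

theorem isPortalFor_self {ε : ℝ} (hε : 0 ≤ ε) (v w : X) : IsPortalFor ε v w w := by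
  unfold IsPortalFor
  nlinarith [dist_self w, dist_nonneg (x := v) (y := w)]

theorem potential_sub_lt_of_not_isPortalFor {ε : ℝ} {v z q : X} {c : X → ℝ}
    (hzq : dist z q = c q - c z) (h : ¬ IsPortalFor ε v z q) :
    dist v q - c q + ε * dist v q < dist v z - c z := by
  unfold IsPortalFor at h
  linarith [not_le.1 h]

theorem dist_eq_abs_sub_of_onPath {r : X} {s : Set X}
    (hpath : ∀ z ∈ s, ∀ w ∈ s, dist r z ≤ dist r w → dist z w = dist r w - dist r z) :
    ∀ z ∈ s, ∀ w ∈ s, dist z w = |dist r z - dist r w| := by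
  intro z hz w hw
  rcases le_total (dist r z) (dist r w) with h | h
  · rw [hpath z hz w hw h, abs_sub_comm, abs_of_nonneg (sub_nonneg.2 h)]
  · rw [dist_comm, hpath w hw z hz h, abs_of_nonneg (sub_nonneg.2 h)]

theorem exists_portals_of_le [DecidableEq X] {ε d L : ℝ} (hε : 0 ≤ ε) {v : X} {s : Set X}
    {c : X → ℝ} (hc : ∀ z ∈ s, ∀ w ∈ s, dist z w = |c z - c w|)
    (hd : ∀ p ∈ s, d ≤ dist v p) (hL : ∀ p ∈ s, L ≤ dist v p - c p) (Q : Finset X) :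
    ↑Q ⊆ s → ∀ z ∈ s, (∀ q ∈ Q, c z ≤ c q) →
      ∃ Z ⊆ Q, (∀ w ∈ Q, ∃ y ∈ insert z Z, IsPortalFor ε v y w) ∧
        ε * d * #Z ≤ dist v z - c z - L := by
  classical
  induction Q using Finset.strongInduction with
  | H Q ih =>
  intro hQs z hz hzQ
  set B : Finset X := Q.filter (fun w => ¬ IsPortalFor ε v z w)
  rcases B.eq_empty_or_nonempty with hB | hB
  · refine ⟨∅, empty_subset _, fun w hw => ⟨z, mem_insert_self _ _, ?_⟩, by simpa using hL z hz⟩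
    simpa using filter_eq_empty_iff.1 hB hw
  obtain ⟨q, hqB, hqmin⟩ := B.exists_min_image c hB
  obtain ⟨hqQ, hq⟩ := mem_filter.1 hqB
  have hqs : q ∈ s := hQs hqQ
  set Q' := (Q.filter (fun p => c q ≤ c p)).erase q
  have hQ'Q : Q' ⊂ Q :=
    Finset.ssubset_of_ssubset_of_subset (erase_ssubset (mem_filter.2 ⟨hqQ, le_rfl⟩))
      (filter_subset _ _)
  obtain ⟨Z, hZQ', hcover, hcard⟩ := ih Q' hQ'Q ((coe_subset.2 hQ'Q.subset).trans hQs) q hqs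
    fun p hp => (mem_filter.1 (mem_of_mem_erase hp)).2
  refine ⟨insert q Z, insert_subset hqQ (hZQ'.trans hQ'Q.subset), ?_, ?_⟩
  · intro w hw
    by_cases hwq : w = q
    · exact ⟨w, by simp [hwq], isPortalFor_self hε v w⟩
    by_cases hqw : c q ≤ c w
    · obtain ⟨y, hy, hyw⟩ := hcover w (mem_erase.2 ⟨hwq, mem_filter.2 ⟨hw, hqw⟩⟩)
      exact ⟨y, mem_insert_of_mem hy, hyw⟩
    · refine ⟨z, mem_insert_self _ _, ?_⟩
      by_contra hzw
      exact hqw (hqmin w (mem_filter.2 ⟨hw, hzw⟩))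
  · have hzq : dist z q = c q - c z := by
      rw [hc z hz q hqs, abs_sub_comm, abs_of_nonneg (sub_nonneg.2 (hzQ q hqQ))]
    have hdrop := potential_sub_lt_of_not_isPortalFor hzq hq
    have hqZ : q ∉ Z := fun h => notMem_erase q _ (hZQ' h)
    have hεd : ε * d ≤ ε * dist v q := mul_le_mul_of_nonneg_left (hd q hqs) hε
    rw [card_insert_of_notMem hqZ, Nat.cast_add_one]
    linarith

theorem exists_portals_of_le_of_closest [DecidableEq X] {ε : ℝ} (hε : 0 < ε) {v z₀ : X}
    {P : Finset X} {c : X → ℝ} (hc : ∀ z ∈ P, ∀ w ∈ P, dist z w = |c z - c w|)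
    (hz₀ : z₀ ∈ P) (hmin : ∀ p ∈ P, dist v z₀ ≤ dist v p) (hd : 0 < dist v z₀) :
    ∃ Z ⊆ P, ε * #Z ≤ 2 ∧ ∀ w ∈ P, c z₀ ≤ c w → ∃ y ∈ insert z₀ Z, IsPortalFor ε v y w := by
  have hL : ∀ p ∈ P, -c z₀ - dist v z₀ ≤ dist v p - c p := by
    intro p hp
    have := hc p hp z₀ hz₀
    have := le_abs_self (c p - c z₀)
    have := dist_triangle_left p z₀ v
    linarith
  obtain ⟨Z, hZ, hcover, hcard⟩ := exists_portals_of_le hε.le (s := ↑P) hc hmin hL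
    (P.filter (fun w => c z₀ ≤ c w)) (coe_subset.2 (filter_subset _ _)) z₀ hz₀
    fun q hq => (mem_filter.1 hq).2
  refine ⟨Z, hZ.trans (filter_subset _ _), ?_, fun w hw hw' => hcover w (mem_filter.2 ⟨hw, hw'⟩)⟩
  refine le_of_mul_le_mul_right ?_ hd
  linarith

end

theorem add_one_lt_four_mul_inv {ε x : ℝ} (h0 : 0 < ε) (h1 : ε < 1) (hx : ε * x ≤ 4) :
    x + 1 < 4 * (ε - ε ^ 2)⁻¹ := by
  have hpos : 0 < ε - ε ^ 2 := by nlinarith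
  rw [← div_eq_mul_inv, lt_div_iff₀ hpos]
  nlinarith

theorem portals_exist {X : Type*} [MetricSpace X] (ε : ℝ) (h0 : 0 < ε) (h1 : ε < 1)
    (v r : X) (P : Finset X)
    (hpath : ∀ z ∈ P, ∀ w ∈ P, dist r z ≤ dist r w → dist z w = dist r w - dist r z)
    (hv : ∀ z ∈ P, 0 < dist v z) :
    ∃ Z : Finset X, Z ⊆ P ∧ (Z.card : ℝ) < 4 * (ε - ε ^ 2)⁻¹ ∧
      ∀ w ∈ P, ∃ z ∈ Z, dist v z + dist z w ≤ (1 + ε) * dist v w := by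
  classical
  rcases P.eq_empty_or_nonempty with rfl | hP
  · refine ⟨∅, subset_refl _, ?_, by simp⟩
    rw [card_empty, Nat.cast_zero]
    exact mul_pos four_pos (inv_pos.2 (by nlinarith))
  obtain ⟨z₀, hz₀, hmin⟩ := P.exists_min_image (dist v) hP
  have hc := dist_eq_abs_sub_of_onPath hpath
  have hc' : ∀ z ∈ P, ∀ w ∈ P, dist z w = |-dist r z - -dist r w| := fun z hz w hw => by
    rw [hc z hz w hw, neg_sub_neg, abs_sub_comm]
  obtain ⟨ZR, hZR, hcardR, hcoverR⟩ := exists_portals_of_le_of_closest h0 hc hz₀ hmin (hv z₀ hz₀)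
  obtain ⟨ZL, hZL, hcardL, hcoverL⟩ := exists_portals_of_le_of_closest h0 hc' hz₀ hmin (hv z₀ hz₀)
  refine ⟨insert z₀ (ZR ∪ ZL), insert_subset hz₀ (union_subset hZR hZL), ?_, ?_⟩
  · calc (#(insert z₀ (ZR ∪ ZL)) : ℝ) ≤ (#ZR + #ZL : ℕ) + 1 := by
          exact_mod_cast (card_insert_le _ _).trans (Nat.add_le_add_right (card_union_le _ _) 1)
      _ < 4 * (ε - ε ^ 2)⁻¹ := add_one_lt_four_mul_inv h0 h1 (by push_cast; linarith)
  · intro w hw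
    rcases le_total (dist r z₀) (dist r w) with h | h
    · obtain ⟨y, hy, hyw⟩ := hcoverR w hw h
      exact ⟨y, insert_subset_insert z₀ subset_union_left hy, hyw⟩
    · obtain ⟨y, hy, hyw⟩ := hcoverL w hw (neg_le_neg h)
      exact ⟨y, insert_subset_insert z₀ subset_union_right hy, hyw⟩
end
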